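/- arXiv:2604.05230 — 2 statements merged into one kernel-verified Lean document; each statement's English description precedes it below -/
import Mathlib

section
/- Let H be a symmetric positive definite n×n real matrix with inverse B = H⁻¹, and let s, y ∈ ℝ^n with yᵀs > 0, s ≠ 0, y ≠ 0. Let τ ≠ 0 and φ be real scalars, set a := (yᵀHy)(sᵀBs)/(yᵀs)² − 1 and assume 1 + aφ ≠ 0, and define η := (1−φ)/(1+aφ). Define v := (yᵀHy)^{1/2}( s/(yᵀs) − Hy/(yᵀHy) ), w := (sᵀBs)^{1/2}( y/(yᵀs) − Bs/(sᵀBs) ), H⁺ := (1/τ)[ H − (H y yᵀ H)/(yᵀ H y) + φ v vᵀ ] + (s sᵀ)/(yᵀ s), and B⁺ := τ[ B − (B s sᵀ B)/(sᵀ B s) + η w wᵀ ] + (y yᵀ)/(yᵀ s). Then B⁺ H⁺ = I, i.e., B⁺ is the inverse of the self-scaled Broyden update H⁺. -/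
/-!
`H⁺` and `B⁺` are the same Broyden-class update, of `H` along `(s, y)` with scale `τ⁻¹` and
parameter `φ`, and of `B` along `(y, s)` with scale `τ` and parameter `η`. Such an update is the
scaled matrix plus a quadratic form `Pᵀ C P` in the two-row frame `P = [s; Hy]`, resp.
`Q = [y; Bs]`, with an explicit `2 × 2` coefficient matrix. Since `B = H⁻¹` maps each frame onto
the other with its rows swapped, `B⁺ H⁺ - 1 = Qᵀ K P` for a `2 × 2` matrix `K`, and `K` turns out
to be `η (1 + a φ) - (1 - φ)` times a fixed matrix: it vanishes by the choice of `η`.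
-/

open Matrix

section Frames

variable {R : Type*} [CommRing R] {ι : Type*}

theorem transpose_of_mul_mul_of (a b : ι → R) (C : Matrix (Fin 2) (Fin 2) R) :
    (of ![a, b])ᵀ * C * of ![a, b] =
      C 0 0 • vecMulVec a a + C 0 1 • vecMulVec a b + C 1 0 • vecMulVec b a
        + C 1 1 • vecMulVec b b := by
  ext i j
  simp only [Matrix.mul_apply, Fin.sum_univ_two, transpose_apply, of_apply, cons_val_zero,
    cons_val_one, Matrix.add_apply, Matrix.smul_apply, vecMulVec_apply, smul_eq_mul]
  ring

theorem vecMulVec_smul_sub_self (r c d : R) (a b : ι → R) :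
    vecMulVec (r • (c • a - d • b)) (r • (c • a - d • b)) =
      (r ^ 2 * c ^ 2) • vecMulVec a a - (r ^ 2 * c * d) • vecMulVec a b
        - (r ^ 2 * c * d) • vecMulVec b a + (r ^ 2 * d ^ 2) • vecMulVec b b := by
  simp only [smul_vecMulVec, vecMulVec_smul, sub_vecMulVec, vecMulVec_sub, smul_sub, smul_smul]
  module

variable [Fintype ι]

theorem Matrix.IsSymm.vecMul_eq_mulVec {M : Matrix ι ι R} (hM : M.IsSymm) (x : ι → R) :
    x ᵥ* M = M *ᵥ x := by
  rw [← vecMul_transpose, hM.eq]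

theorem mul_transpose_of (M : Matrix ι ι R) (a b : ι → R) :
    M * (of ![a, b])ᵀ = (of ![M *ᵥ a, M *ᵥ b])ᵀ := by
  ext i j
  fin_cases j <;> rfl

theorem of_mul_transpose_of (a b c d : ι → R) :
    of ![a, b] * (of ![c, d])ᵀ = !![a ⬝ᵥ c, a ⬝ᵥ d; b ⬝ᵥ c, b ⬝ᵥ d] := by
  ext i j
  fin_cases i <;> fin_cases j <;> rfl

variable [DecidableEq ι]

theorem mul_eq_one_of_lowRank_updates {k : Type*} [Fintype k] {H B : Matrix ι ι R}
    (P Q : Matrix k ι R) (C D J J' : Matrix k k R) {h b : R}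
    (hbh : b * h = 1) (hBH : B * H = 1) (hBP : B * Pᵀ = Qᵀ * J') (hQH : Q * H = J * P)
    (hK : b • (J' * C) + h • (D * J) + D * (Q * Pᵀ) * C = 0) :
    (b • B + Qᵀ * D * Q) * (h • H + Pᵀ * C * P) = 1 := by
  calc (b • B + Qᵀ * D * Q) * (h • H + Pᵀ * C * P)
      = (b * h) • (B * H) + b • (B * Pᵀ * C * P) + h • (Qᵀ * D * (Q * H))
          + Qᵀ * D * (Q * Pᵀ) * C * P := by
        simp only [add_mul, mul_add, smul_mul_smul, Matrix.smul_mul, Matrix.mul_smul,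
          Matrix.mul_assoc]
        abel
    _ = 1 + Qᵀ * (b • (J' * C) + h • (D * J) + D * (Q * Pᵀ) * C) * P := by
        rw [hbh, hBH, hBP, hQH, one_smul]
        simp only [Matrix.add_mul, Matrix.mul_add, Matrix.smul_mul, Matrix.mul_smul,
          Matrix.mul_assoc]
        abel
    _ = 1 := by rw [hK, Matrix.mul_zero, Matrix.zero_mul, add_zero]

variable {M N : Matrix ι ι R}

theorem of_mul_eq_swap_mul_of (hNM : N * M = 1) (hM : M.IsSymm) (u x : ι → R) :
    of ![x, N *ᵥ u] * M = !![(0 : R), 1; 1, 0] * of ![u, M *ᵥ x] := by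
  ext i j
  fin_cases i <;> simp [hM.vecMul_eq_mulVec, mul_eq_one_comm.mp hNM]

theorem mul_transpose_of_eq_transpose_of_mul_swap (hNM : N * M = 1) (u x : ι → R) :
    N * (of ![u, M *ᵥ x])ᵀ = (of ![x, N *ᵥ u])ᵀ * !![(0 : R), 1; 1, 0] := by
  rw [mul_transpose_of, mulVec_mulVec, hNM, one_mulVec]
  ext i j
  fin_cases j <;> simp [mul_apply]

theorem of_mul_transpose_of_eq_of_mul_eq_one (hNM : N * M = 1) (hM : M.IsSymm) (u x : ι → R) :
    of ![x, N *ᵥ u] * (of ![u, M *ᵥ x])ᵀ =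
      !![x ⬝ᵥ u, x ⬝ᵥ M *ᵥ x; u ⬝ᵥ N *ᵥ u, x ⬝ᵥ u] := by
  have hcross : N *ᵥ u ⬝ᵥ M *ᵥ x = x ⬝ᵥ u := by
    rw [dotProduct_mulVec, hM.vecMul_eq_mulVec, mulVec_mulVec, mul_eq_one_comm.mp hNM,
      one_mulVec, dotProduct_comm]
  rw [of_mul_transpose_of, hcross, dotProduct_comm (N *ᵥ u)]

end Frames

section BroydenClass

def broydenCoeff {K : Type*} [Field K] (t φ σ γ : K) : Matrix (Fin 2) (Fin 2) K :=
  !![σ⁻¹ + t * φ * γ / σ ^ 2, -(t * φ / σ); -(t * φ / σ), t * (φ - 1) / γ]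

theorem broydenCoeff_defect {K : Type*} [Field K] {σ α β τ : K} (hσ : σ ≠ 0) (hα : α ≠ 0)
    (hβ : β ≠ 0) (hτ : τ ≠ 0) (φ η : K) :
    τ • (!![0, 1; 1, 0] * broydenCoeff τ⁻¹ φ σ α) + τ⁻¹ • (broydenCoeff τ η σ β * !![0, 1; 1, 0])
      + broydenCoeff τ η σ β * !![σ, α; β, σ] * broydenCoeff τ⁻¹ φ σ α =
      (η * (1 + (α * β / σ ^ 2 - 1) * φ) - (1 - φ)) • !![-σ⁻¹, α⁻¹; β⁻¹, -σ / (α * β)] := by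
  ext i j
  fin_cases i <;> fin_cases j <;> simp [broydenCoeff] <;> field_simp <;> ring

variable {ι : Type*} [Fintype ι]

noncomputable def broydenUpdate (M : Matrix ι ι ℝ) (s y : ι → ℝ) (t φ : ℝ) : Matrix ι ι ℝ :=
  t • (M - (y ⬝ᵥ M *ᵥ y)⁻¹ • vecMulVec (M *ᵥ y) (y ᵥ* M)
      + φ • vecMulVec (√(y ⬝ᵥ M *ᵥ y) • ((y ⬝ᵥ s)⁻¹ • s - (y ⬝ᵥ M *ᵥ y)⁻¹ • M *ᵥ y))
        (√(y ⬝ᵥ M *ᵥ y) • ((y ⬝ᵥ s)⁻¹ • s - (y ⬝ᵥ M *ᵥ y)⁻¹ • M *ᵥ y)))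
    + (y ⬝ᵥ s)⁻¹ • vecMulVec s s

theorem broydenUpdate_eq {M : Matrix ι ι ℝ} {s y : ι → ℝ} (hMy : y ᵥ* M = M *ᵥ y)
    (hγ : 0 < y ⬝ᵥ M *ᵥ y) (t φ : ℝ) :
    broydenUpdate M s y t φ = t • M + (of ![s, M *ᵥ y])ᵀ *
      broydenCoeff t φ (y ⬝ᵥ s) (y ⬝ᵥ M *ᵥ y) * of ![s, M *ᵥ y] := by
  rw [broydenUpdate, hMy, vecMulVec_smul_sub_self, Real.sq_sqrt hγ.le, transpose_of_mul_mul_of]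
  simp only [broydenCoeff, of_apply, cons_val', cons_val_zero, cons_val_one, empty_val',
    cons_val_fin_one]
  match_scalars <;> field_simp <;> ring

end BroydenClass

/-- The self-scaled Broyden updates of the inverse-Hessian approximation `H`
and the Hessian approximation `B = H⁻¹` are mutually inverse: with
`a = (yᵀHy)(sᵀBs)/(yᵀs)² − 1`, `η = (1−φ)/(1+aφ)`,
`v = (yᵀHy)^{1/2}(s/(yᵀs) − Hy/(yᵀHy))`, `w = (sᵀBs)^{1/2}(y/(yᵀs) − Bs/(sᵀBs))`,
`H⁺ = (1/τ)[H − (HyyᵀH)/(yᵀHy) + φvvᵀ] + ssᵀ/(yᵀs)` and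
`B⁺ = τ[B − (BssᵀB)/(sᵀBs) + ηwwᵀ] + yyᵀ/(yᵀs)`, one has `B⁺H⁺ = I`. -/
theorem stmt_4 (n : ℕ) (H B : Matrix (Fin n) (Fin n) ℝ)
    (hH : H.PosDef) (hB : B = H⁻¹)
    (s y : Fin n → ℝ) (hys : 0 < y ⬝ᵥ s) (hs : s ≠ 0) (hy : y ≠ 0)
    (τ φ : ℝ) (hτ : τ ≠ 0)
    (a : ℝ) (ha : a = (y ⬝ᵥ H.mulVec y) * (s ⬝ᵥ B.mulVec s) / (y ⬝ᵥ s) ^ 2 - 1)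
    (haφ : 1 + a * φ ≠ 0)
    (η : ℝ) (hη : η = (1 - φ) / (1 + a * φ))
    (v : Fin n → ℝ)
    (hv : v = Real.sqrt (y ⬝ᵥ H.mulVec y) •
      ((y ⬝ᵥ s)⁻¹ • s - (y ⬝ᵥ H.mulVec y)⁻¹ • H.mulVec y))
    (w : Fin n → ℝ)
    (hw : w = Real.sqrt (s ⬝ᵥ B.mulVec s) •
      ((y ⬝ᵥ s)⁻¹ • y - (s ⬝ᵥ B.mulVec s)⁻¹ • B.mulVec s))
    (Hplus : Matrix (Fin n) (Fin n) ℝ)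
    (hHplus : Hplus = τ⁻¹ •
        (H - (y ⬝ᵥ H.mulVec y)⁻¹ • vecMulVec (H.mulVec y) (vecMul y H)
          + φ • vecMulVec v v)
      + (y ⬝ᵥ s)⁻¹ • vecMulVec s s)
    (Bplus : Matrix (Fin n) (Fin n) ℝ)
    (hBplus : Bplus = τ •
        (B - (s ⬝ᵥ B.mulVec s)⁻¹ • vecMulVec (B.mulVec s) (vecMul s B)
          + η • vecMulVec w w)
      + (y ⬝ᵥ s)⁻¹ • vecMulVec y y) :
    Bplus * Hplus = 1 := by
  have hBpd : B.PosDef := hB ▸ hH.inv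
  have hHsymm : H.IsSymm := isHermitian_iff_isSymm.mp hH.isHermitian
  have hBsymm : B.IsSymm := isHermitian_iff_isSymm.mp hBpd.isHermitian
  have hBH : B * H = 1 := hB ▸ nonsing_inv_mul H ((isUnit_iff_isUnit_det H).mp hH.isUnit)
  have hα : 0 < y ⬝ᵥ H *ᵥ y := by simpa using hH.dotProduct_mulVec_pos hy
  have hβ : 0 < s ⬝ᵥ B *ᵥ s := by simpa using hBpd.dotProduct_mulVec_pos hs
  have hHplus' : Hplus = broydenUpdate H s y τ⁻¹ φ := by rw [hHplus, hv]; rfl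
  have hBplus' : Bplus = broydenUpdate B y s τ η := by
    rw [hBplus, hw, dotProduct_comm y s]; rfl
  rw [hHplus', hBplus', broydenUpdate_eq (hHsymm.vecMul_eq_mulVec y) hα,
    broydenUpdate_eq (hBsymm.vecMul_eq_mulVec s) hβ, dotProduct_comm s y]
  refine mul_eq_one_of_lowRank_updates _ _ _ _ _ _ (mul_inv_cancel₀ hτ) hBH
    (mul_transpose_of_eq_transpose_of_mul_swap hBH s y) (of_mul_eq_swap_mul_of hBH hHsymm s y) ?_
  rw [of_mul_transpose_of_eq_of_mul_eq_one hBH hHsymm, broydenCoeff_defect hys.ne' hα.ne' hβ.ne' hτ,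
    ← ha, hη, div_mul_cancel₀ _ haφ, sub_self, zero_smul]
end

section
/- Let H be a symmetric positive definite n×n real matrix, let s, y ∈ ℝ^n with yᵀs > 0 and y ≠ 0, let τ > 0, and let φ ∈ [0,1]. Define v := (yᵀHy)^{1/2}( s/(yᵀs) − Hy/(yᵀHy) ) and H⁺ := (1/τ)[ H − (H y yᵀ H)/(yᵀ H y) + φ v vᵀ ] + (s sᵀ)/(yᵀ s). Then H⁺ is symmetric and positive definite. -/
/-!
Write `P = H - H y yᵀ H / (yᵀ H y)`. Expanding the square shows
`xᵀ P x = zᵀ H z` for `z = x - (yᵀ H x / yᵀ H y) y`, so `P` is positive semidefinite and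
`xᵀ P x = 0` forces `x` onto the line through `y`. Then `H⁺` is `P / τ + s sᵀ / (yᵀ s)` plus a
positive semidefinite multiple of `v vᵀ`; the first sum is positive definite because on the
line through `y` the term `(sᵀ x)² / (yᵀ s)` is positive, as `yᵀ s > 0`.
-/

open Matrix

namespace Matrix

lemma PosSemidef.posDef_add_of_dotProduct_mulVec_eq_zero {ι R : Type*} [Fintype ι]
    [Ring R] [PartialOrder R] [StarRing R] [AddLeftMono R] {A B : Matrix ι ι R}
    (hA : A.PosSemidef) (hB : B.PosSemidef)
    (h : ∀ x ≠ 0, star x ⬝ᵥ A *ᵥ x = 0 → 0 < star x ⬝ᵥ B *ᵥ x) : (A + B).PosDef := by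
  refine .of_dotProduct_mulVec_pos (hA.isHermitian.add hB.isHermitian) fun x hx => ?_
  rw [add_mulVec, dotProduct_add]
  rcases (hA.dotProduct_mulVec_nonneg x).eq_or_lt with hAx | hAx
  · rw [← hAx, zero_add]
    exact h x hx hAx.symm
  · exact add_pos_of_pos_of_nonneg hAx (hB.dotProduct_mulVec_nonneg x)

variable {ι : Type*} [Fintype ι]

lemma dotProduct_vecMulVec_mulVec (u w x : ι → ℝ) :
    x ⬝ᵥ vecMulVec u w *ᵥ x = (x ⬝ᵥ u) * (w ⬝ᵥ x) := by
  rw [vecMulVec_mulVec, op_smul_eq_smul, dotProduct_smul, smul_eq_mul, mul_comm]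

lemma posSemidef_vecMulVec_self (u : ι → ℝ) : (vecMulVec u u).PosSemidef := by
  simpa using posSemidef_vecMulVec_self_star u

lemma IsSymm.vecMul_eq_mulVec_s5 {H : Matrix ι ι ℝ} (hH : H.IsSymm) (x : ι → ℝ) :
    x ᵥ* H = H *ᵥ x := by
  rw [← mulVec_transpose, hH.eq]

lemma IsSymm.dotProduct_mulVec_comm {H : Matrix ι ι ℝ} (hH : H.IsSymm) (x y : ι → ℝ) :
    x ⬝ᵥ H *ᵥ y = y ⬝ᵥ H *ᵥ x := by
  rw [dotProduct_mulVec, hH.vecMul_eq_mulVec_s5, dotProduct_comm]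

/-- When `y ⬝ᵥ H *ᵥ y = 0`, the junk value `0⁻¹ = 0` makes this `H` itself. -/
noncomputable def deflation (H : Matrix ι ι ℝ) (y : ι → ℝ) : Matrix ι ι ℝ :=
  H - (y ⬝ᵥ H *ᵥ y)⁻¹ • vecMulVec (H *ᵥ y) (y ᵥ* H)

lemma IsSymm.dotProduct_deflation_mulVec {H : Matrix ι ι ℝ} (hH : H.IsSymm) (y x : ι → ℝ) :
    x ⬝ᵥ deflation H y *ᵥ x =
      (x - ((y ⬝ᵥ H *ᵥ x) / (y ⬝ᵥ H *ᵥ y)) • y) ⬝ᵥ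
        H *ᵥ (x - ((y ⬝ᵥ H *ᵥ x) / (y ⬝ᵥ H *ᵥ y)) • y) := by
  have hxy := hH.dotProduct_mulVec_comm x y
  rw [Matrix.deflation, hH.vecMul_eq_mulVec_s5]
  simp only [sub_mulVec, smul_mulVec, mulVec_sub, mulVec_smul, dotProduct_sub, sub_dotProduct,
    dotProduct_smul, smul_dotProduct, smul_eq_mul, dotProduct_vecMulVec_mulVec,
    dotProduct_comm (H *ᵥ y) x, hxy]
  rcases eq_or_ne (y ⬝ᵥ H *ᵥ y) 0 with ha | ha
  · simp [ha]
  · field_simp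
    ring

lemma IsSymm.deflation {H : Matrix ι ι ℝ} (hH : H.IsSymm) (y : ι → ℝ) :
    (Matrix.deflation H y).IsSymm := by
  rw [Matrix.deflation, hH.vecMul_eq_mulVec_s5]
  exact hH.sub (IsSymm.smul (transpose_vecMulVec (H *ᵥ y) (H *ᵥ y)) _)

lemma PosSemidef.deflation {H : Matrix ι ι ℝ} (hH : H.PosSemidef) (y : ι → ℝ) :
    (Matrix.deflation H y).PosSemidef := by
  have hsymm : H.IsSymm := isHermitian_iff_isSymm.mp hH.isHermitian
  refine .of_dotProduct_mulVec_nonneg (isHermitian_iff_isSymm.mpr (hsymm.deflation y)) fun x => ?_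
  rw [star_trivial, hsymm.dotProduct_deflation_mulVec]
  simpa only [star_trivial] using hH.dotProduct_mulVec_nonneg _

lemma PosDef.exists_eq_smul_of_dotProduct_deflation_mulVec_eq_zero {H : Matrix ι ι ℝ}
    (hH : H.PosDef) {x y : ι → ℝ} (hx : x ⬝ᵥ deflation H y *ᵥ x = 0) :
    ∃ t : ℝ, x = t • y := by
  have hsymm : H.IsSymm := isHermitian_iff_isSymm.mp hH.isHermitian
  rw [hsymm.dotProduct_deflation_mulVec] at hx
  refine ⟨(y ⬝ᵥ H *ᵥ x) / (y ⬝ᵥ H *ᵥ y), sub_eq_zero.mp ?_⟩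
  by_contra hz
  exact (hH.dotProduct_mulVec_pos hz).ne' (by simpa using hx)

end Matrix

theorem stmt_5_general (n : ℕ) (H : Matrix (Fin n) (Fin n) ℝ) (hH : H.PosDef)
    (s y : Fin n → ℝ) (hys : 0 < y ⬝ᵥ s)
    (τ : ℝ) (hτ : 0 < τ) (φ : ℝ) (hφ0 : 0 ≤ φ)
    (v : Fin n → ℝ)
    (Hplus : Matrix (Fin n) (Fin n) ℝ)
    (hHplus : Hplus = τ⁻¹ •
        (H - (y ⬝ᵥ H.mulVec y)⁻¹ • vecMulVec (H.mulVec y) (vecMul y H)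
          + φ • vecMulVec v v)
      + (y ⬝ᵥ s)⁻¹ • vecMulVec s s) :
    Hplus.IsSymm ∧ Hplus.PosDef := by
  have hsplit : Hplus = (τ⁻¹ • deflation H y + (y ⬝ᵥ s)⁻¹ • vecMulVec s s)
      + (τ⁻¹ * φ) • vecMulVec v v := by
    rw [hHplus, deflation]
    module
  have hmain : (τ⁻¹ • deflation H y + (y ⬝ᵥ s)⁻¹ • vecMulVec s s).PosDef := by
    refine PosSemidef.posDef_add_of_dotProduct_mulVec_eq_zero
      ((hH.posSemidef.deflation y).smul (by positivity))
      ((posSemidef_vecMulVec_self s).smul (by positivity)) fun x hx hPx => ?_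
    simp only [star_trivial, smul_mulVec, dotProduct_smul, smul_eq_mul, mul_eq_zero,
      inv_eq_zero, hτ.ne', false_or] at hPx ⊢
    obtain ⟨t, rfl⟩ := hH.exists_eq_smul_of_dotProduct_deflation_mulVec_eq_zero hPx
    have ht : t ≠ 0 := by rintro rfl; simp at hx
    have hsx : s ⬝ᵥ t • y ≠ 0 := by
      rw [dotProduct_smul, dotProduct_comm, smul_eq_mul]
      exact mul_ne_zero ht hys.ne'
    rw [dotProduct_vecMulVec_mulVec, dotProduct_comm (t • y) s]
    exact mul_pos (inv_pos.mpr hys) (mul_self_pos.mpr hsx)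
  have hpos := hsplit ▸
    hmain.add_posSemidef ((posSemidef_vecMulVec_self v).smul (by positivity))
  exact ⟨isHermitian_iff_isSymm.mp hpos.isHermitian, hpos⟩

/-- If `H` is symmetric positive definite, `yᵀs > 0`, `y ≠ 0`, `τ > 0` and
`φ ∈ [0,1]`, then the self-scaled Broyden update
`H⁺ = (1/τ)[H − (HyyᵀH)/(yᵀHy) + φvvᵀ] + ssᵀ/(yᵀs)` is symmetric positive definite. -/
theorem stmt_5 (n : ℕ) (H : Matrix (Fin n) (Fin n) ℝ) (hH : H.PosDef)
    (s y : Fin n → ℝ) (hys : 0 < y ⬝ᵥ s) (hy : y ≠ 0)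
    (τ : ℝ) (hτ : 0 < τ) (φ : ℝ) (hφ0 : 0 ≤ φ) (hφ1 : φ ≤ 1)
    (v : Fin n → ℝ)
    (hv : v = Real.sqrt (y ⬝ᵥ H.mulVec y) •
      ((y ⬝ᵥ s)⁻¹ • s - (y ⬝ᵥ H.mulVec y)⁻¹ • H.mulVec y))
    (Hplus : Matrix (Fin n) (Fin n) ℝ)
    (hHplus : Hplus = τ⁻¹ •
        (H - (y ⬝ᵥ H.mulVec y)⁻¹ • vecMulVec (H.mulVec y) (vecMul y H)
          + φ • vecMulVec v v)
      + (y ⬝ᵥ s)⁻¹ • vecMulVec s s) :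
    Hplus.IsSymm ∧ Hplus.PosDef :=
  stmt_5_general n H hH s y hys τ hτ φ hφ0 v Hplus hHplus
end
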